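/- Let λ > 0, μ > 0, and define for 0 ≤ x ≤ t the density f(t,x) = λ e^{−λx} e^{−μ(t−x)} I₀(2√(λμ x(t−x))) + √(λμ x/(t−x)) I₁(2√(λμ x(t−x))) e^{−λx} e^{−μ(t−x)}, plus atom e^{−λt}δ_t(x). Then for every s > 0 and x ≥ 0, the Laplace transform in t of this distribution at x equals e^{−x(s+λ)} e^{λμx/(s+μ)} (1 + λ/(s+μ)); equivalently, e^{−(λ+s)x} + ∫_x^∞ f(t,x) e^{−st} dt = (1 + λ/(s+μ)) e^{−x(s+λ)} e^{λμx/(s+μ)}. -/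

import Mathlib

open MeasureTheory Real Filter Set

noncomputable def besselI0 (z : ℝ) : ℝ :=
  ∑' k : ℕ, (z / 2) ^ (2 * k) / ((Nat.factorial k : ℝ)) ^ 2

noncomputable def besselI1 (z : ℝ) : ℝ :=
  ∑' k : ℕ, (z / 2) ^ (2 * k + 1) / ((Nat.factorial k : ℝ) * (Nat.factorial (k + 1) : ℝ))


lemma aux_exp_tsum (y : ℝ) : Real.exp y = ∑' k : ℕ, y ^ k / (Nat.factorial k : ℝ) := by
  rw [Real.exp_eq_exp_ℝ, NormedSpace.exp_eq_tsum_div]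

lemma aux_summable0 (y : ℝ) (hy : 0 ≤ y) :
    Summable (fun k : ℕ => y ^ k / ((Nat.factorial k : ℝ)) ^ 2) := by
  refine Summable.of_nonneg_of_le (fun k => by positivity) (fun k => ?_)
    (Real.summable_pow_div_factorial y)
  have h1 : (1 : ℝ) ≤ (Nat.factorial k : ℝ) := by exact_mod_cast Nat.one_le_iff_ne_zero.2 k.factorial_ne_zero
  have h0 : (0 : ℝ) < (Nat.factorial k : ℝ) := by exact_mod_cast k.factorial_pos
  refine div_le_div_of_nonneg_left (by positivity) h0 ?_
  nlinarith

lemma aux_summable1 (y : ℝ) (hy : 0 ≤ y) :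
    Summable (fun k : ℕ => y ^ k / ((Nat.factorial k : ℝ) * (Nat.factorial (k + 1) : ℝ))) := by
  refine Summable.of_nonneg_of_le (fun k => by positivity) (fun k => ?_)
    (Real.summable_pow_div_factorial y)
  have h1 : (1 : ℝ) ≤ (Nat.factorial (k + 1) : ℝ) := by
    exact_mod_cast Nat.one_le_iff_ne_zero.2 (k + 1).factorial_ne_zero
  have h0 : (0 : ℝ) < (Nat.factorial k : ℝ) := by exact_mod_cast k.factorial_pos
  refine div_le_div_of_nonneg_left (by positivity) h0 ?_
  nlinarith

lemma aux_integral (p : ℝ) (hp : 0 < p) (k : ℕ) :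
    ∫ u in Ioi (0 : ℝ), u ^ k * Real.exp (-(p * u)) = (Nat.factorial k : ℝ) / p ^ (k + 1) := by
  have h := integral_rpow_mul_exp_neg_mul_Ioi (a := (k : ℝ) + 1) (r := p) (by positivity) hp
  rw [show ((k : ℝ) + 1 - 1) = ((k : ℕ) : ℝ) by norm_num] at h
  simp_rw [Real.rpow_natCast] at h
  rw [h, Real.Gamma_nat_eq_factorial,
    show ((k : ℝ) + 1) = (((k + 1 : ℕ)) : ℝ) by push_cast; ring, Real.rpow_natCast]
  rw [div_pow, one_pow]
  ring

lemma aux_integrable (p : ℝ) (hp : 0 < p) (k : ℕ) :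
    IntegrableOn (fun u : ℝ => u ^ k * Real.exp (-(p * u))) (Ioi 0) := by
  have h := integrableOn_rpow_mul_exp_neg_mul_rpow (p := 1) (s := (k : ℝ)) (b := p)
    (by exact_mod_cast lt_of_lt_of_le (by norm_num : (-1 : ℝ) < 0) (Nat.cast_nonneg k)) one_pos hp
  refine h.congr_fun (fun u hu => ?_) measurableSet_Ioi
  beta_reduce
  rw [Real.rpow_natCast, Real.rpow_one, neg_mul]

lemma aux_translate (f : ℝ → ℝ) (x : ℝ) :
    ∫ t in Ioi x, f (t - x) = ∫ u in Ioi (0 : ℝ), f u := by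
  have A : MeasurableEmbedding (fun u : ℝ => u + x) :=
    (Homeomorph.addRight x).isClosedEmbedding.measurableEmbedding
  have h := A.setIntegral_map (μ := volume) (g := fun t => f (t - x)) (s := Ioi x)
  rw [map_add_right_eq_self] at h
  rw [h]
  have hpre : (fun u : ℝ => u + x) ⁻¹' Ioi x = Ioi 0 := by
    ext u; simp [lt_add_iff_pos_left]  -- u + x > x ↔ u > 0
  rw [hpre]
  simp

noncomputable def auxC (lam mu x : ℝ) (k : ℕ) : ℝ :=
  lam * (lam * mu * x) ^ k / ((Nat.factorial k : ℝ)) ^ 2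
    + (lam * mu * x) ^ (k + 1) / ((Nat.factorial k : ℝ) * (Nat.factorial (k + 1) : ℝ))

noncomputable def auxG (lam mu x s : ℝ) (k : ℕ) (u : ℝ) : ℝ :=
  auxC lam mu x k * (u ^ k * Real.exp (-((s + mu) * u)))

lemma auxG_tsum (lam mu x s : ℝ) (ha : 0 ≤ lam * mu * x) (u : ℝ) (hu : 0 ≤ u) :
    ∑' k, auxG lam mu x s k u
      = (lam * ∑' k : ℕ, (lam * mu * x * u) ^ k / ((Nat.factorial k : ℝ)) ^ 2
          + ∑' k : ℕ, (lam * mu * x) ^ (k + 1) * u ^ k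
              / ((Nat.factorial k : ℝ) * (Nat.factorial (k + 1) : ℝ)))
        * Real.exp (-((s + mu) * u)) := by
  have hau : 0 ≤ lam * mu * x * u := mul_nonneg ha hu
  have s0 : Summable (fun k : ℕ => (lam * mu * x * u) ^ k / ((Nat.factorial k : ℝ)) ^ 2) :=
    aux_summable0 _ hau
  have s1 : Summable (fun k : ℕ => (lam * mu * x) ^ (k + 1) * u ^ k
      / ((Nat.factorial k : ℝ) * (Nat.factorial (k + 1) : ℝ))) := by
    refine ((aux_summable1 (lam * mu * x * u) hau).mul_left (lam * mu * x)).congr fun k => ?_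
    rw [mul_pow]; ring
  calc ∑' k, auxG lam mu x s k u
      = ∑' k : ℕ, (lam * ((lam * mu * x * u) ^ k / ((Nat.factorial k : ℝ)) ^ 2)
          + (lam * mu * x) ^ (k + 1) * u ^ k
              / ((Nat.factorial k : ℝ) * (Nat.factorial (k + 1) : ℝ)))
          * Real.exp (-((s + mu) * u)) := by
        refine tsum_congr fun k => ?_
        unfold auxG auxC
        rw [mul_pow]; ring
    _ = _ := by
        rw [tsum_mul_right, Summable.tsum_add (s0.mul_left lam) s1, tsum_mul_left]

lemma auxC_term (lam mu x s : ℝ) (hp : (s + mu) ≠ 0) (k : ℕ) :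
    auxC lam mu x k * ((Nat.factorial k : ℝ) / (s + mu) ^ (k + 1))
      = lam / (s + mu) * ((lam * mu * x / (s + mu)) ^ k / (Nat.factorial k : ℝ))
        + (lam * mu * x / (s + mu)) ^ (k + 1) / (Nat.factorial (k + 1) : ℝ) := by
  have hk : ((Nat.factorial k : ℝ)) ≠ 0 := by exact_mod_cast k.factorial_ne_zero
  have hk1 : ((Nat.factorial (k + 1) : ℝ)) ≠ 0 := by exact_mod_cast (k + 1).factorial_ne_zero
  unfold auxC
  rw [div_pow, div_pow]
  field_simp
  ring

lemma auxC_summable (lam mu x s : ℝ) (hp : (s + mu) ≠ 0) :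
    Summable (fun k : ℕ => auxC lam mu x k * ((Nat.factorial k : ℝ) / (s + mu) ^ (k + 1))) := by
  set y := lam * mu * x / (s + mu) with hy
  have h1 : Summable (fun k : ℕ => lam / (s + mu) * (y ^ k / (Nat.factorial k : ℝ))) :=
    (Real.summable_pow_div_factorial y).mul_left _
  have h2 : Summable (fun k : ℕ => y ^ (k + 1) / (Nat.factorial (k + 1) : ℝ)) :=
    (summable_nat_add_iff 1).2 (Real.summable_pow_div_factorial y)
  exact (h1.add h2).congr fun k => (auxC_term lam mu x s hp k).symm

lemma auxC_tsum (lam mu x s : ℝ) (hp : (s + mu) ≠ 0) :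
    ∑' k : ℕ, auxC lam mu x k * ((Nat.factorial k : ℝ) / (s + mu) ^ (k + 1))
      = lam / (s + mu) * Real.exp (lam * mu * x / (s + mu))
        + (Real.exp (lam * mu * x / (s + mu)) - 1) := by
  set y := lam * mu * x / (s + mu) with hy
  have h1 : Summable (fun k : ℕ => lam / (s + mu) * (y ^ k / (Nat.factorial k : ℝ))) :=
    (Real.summable_pow_div_factorial y).mul_left _
  have h2 : Summable (fun k : ℕ => y ^ (k + 1) / (Nat.factorial (k + 1) : ℝ)) :=
    (summable_nat_add_iff 1).2 (Real.summable_pow_div_factorial y)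
  rw [tsum_congr (auxC_term lam mu x s hp), Summable.tsum_add h1 h2, tsum_mul_left, ← aux_exp_tsum]
  have h3 : ∑' k : ℕ, y ^ (k + 1) / (Nat.factorial (k + 1) : ℝ) = Real.exp y - 1 := by
    have h := Summable.tsum_eq_zero_add (Real.summable_pow_div_factorial y)
    rw [aux_exp_tsum y, h]
    simp
  rw [h3]

theorem stmt_19 (lam mu s x : ℝ) (hlam : 0 < lam) (hmu : 0 < mu) (hs : 0 < s) (hx : 0 ≤ x) :
    Real.exp (-(lam + s) * x)
      + ∫ t in Ioi x,
          (lam * Real.exp (-lam * x) * Real.exp (-mu * (t - x))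
              * besselI0 (2 * Real.sqrt (lam * mu * x * (t - x)))
            + Real.sqrt (lam * mu * x / (t - x))
              * besselI1 (2 * Real.sqrt (lam * mu * x * (t - x)))
              * Real.exp (-lam * x) * Real.exp (-mu * (t - x)))
          * Real.exp (-s * t)
    = (1 + lam / (s + mu)) * Real.exp (-x * (s + lam))
        * Real.exp (lam * mu * x / (s + mu)) := by
  have hp0 : 0 < s + mu := by positivity
  have hpne : (s + mu) ≠ 0 := ne_of_gt hp0
  have ha0 : (0 : ℝ) ≤ lam * mu * x := by positivity
  -- pointwise identity on Ioi x
  have key : ∀ t ∈ Ioi x,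
      (lam * Real.exp (-lam * x) * Real.exp (-mu * (t - x))
          * besselI0 (2 * Real.sqrt (lam * mu * x * (t - x)))
        + Real.sqrt (lam * mu * x / (t - x))
          * besselI1 (2 * Real.sqrt (lam * mu * x * (t - x)))
          * Real.exp (-lam * x) * Real.exp (-mu * (t - x)))
        * Real.exp (-s * t)
      = Real.exp (-(lam + s) * x) * ∑' k, auxG lam mu x s k (t - x) := by
    intro t ht
    have hu : 0 < t - x := sub_pos.2 ht
    have hau : 0 ≤ lam * mu * x * (t - x) := mul_nonneg ha0 hu.le
    have hb0 : besselI0 (2 * Real.sqrt (lam * mu * x * (t - x)))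
        = ∑' k : ℕ, (lam * mu * x * (t - x)) ^ k / ((Nat.factorial k : ℝ)) ^ 2 := by
      unfold besselI0
      refine tsum_congr fun k => ?_
      rw [mul_div_cancel_left₀ _ (two_ne_zero), pow_mul, Real.sq_sqrt hau]
    have hb1 : besselI1 (2 * Real.sqrt (lam * mu * x * (t - x)))
        = ∑' k : ℕ, (lam * mu * x * (t - x)) ^ k * Real.sqrt (lam * mu * x * (t - x))
            / ((Nat.factorial k : ℝ) * (Nat.factorial (k + 1) : ℝ)) := by
      unfold besselI1
      refine tsum_congr fun k => ?_
      rw [mul_div_cancel_left₀ _ (two_ne_zero), pow_succ, pow_mul, Real.sq_sqrt hau]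
    have hss : Real.sqrt (lam * mu * x / (t - x)) * Real.sqrt (lam * mu * x * (t - x))
        = lam * mu * x := by
      rw [← Real.sqrt_mul (div_nonneg ha0 hu.le),
        show lam * mu * x / (t - x) * (lam * mu * x * (t - x)) = (lam * mu * x) ^ 2 by
          field_simp]
      exact Real.sqrt_sq ha0
    have hb1' : Real.sqrt (lam * mu * x / (t - x))
          * (∑' k : ℕ, (lam * mu * x * (t - x)) ^ k * Real.sqrt (lam * mu * x * (t - x))
            / ((Nat.factorial k : ℝ) * (Nat.factorial (k + 1) : ℝ)))
        = ∑' k : ℕ, (lam * mu * x) ^ (k + 1) * (t - x) ^ k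
            / ((Nat.factorial k : ℝ) * (Nat.factorial (k + 1) : ℝ)) := by
      rw [← tsum_mul_left]
      refine tsum_congr fun k => ?_
      rw [show Real.sqrt (lam * mu * x / (t - x))
            * ((lam * mu * x * (t - x)) ^ k * Real.sqrt (lam * mu * x * (t - x))
              / ((Nat.factorial k : ℝ) * (Nat.factorial (k + 1) : ℝ)))
          = (Real.sqrt (lam * mu * x / (t - x)) * Real.sqrt (lam * mu * x * (t - x)))
            * ((lam * mu * x * (t - x)) ^ k
              / ((Nat.factorial k : ℝ) * (Nat.factorial (k + 1) : ℝ))) from by ring,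
        hss, mul_pow]
      ring
    rw [hb0, hb1, hb1', auxG_tsum lam mu x s ha0 (t - x) hu.le,
      show -s * t = -s * x + -s * (t - x) by ring, Real.exp_add,
      show -((s + mu) * (t - x)) = -mu * (t - x) + -s * (t - x) by ring, Real.exp_add,
      show -(lam + s) * x = -lam * x + -s * x by ring, Real.exp_add]
    ring
  -- integrability and values
  have hint : ∀ k : ℕ, IntegrableOn (auxG lam mu x s k) (Ioi 0) := fun k =>
    (aux_integrable (s + mu) hp0 k).const_mul _
  have hval : ∀ k : ℕ, ∫ u in Ioi (0 : ℝ), auxG lam mu x s k u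
      = auxC lam mu x k * ((Nat.factorial k : ℝ) / (s + mu) ^ (k + 1)) := by
    intro k
    unfold auxG
    rw [integral_const_mul, aux_integral (s + mu) hp0 k]
  have hcnn : ∀ k, 0 ≤ auxC lam mu x k := fun k => by unfold auxC; positivity
  have hnorm : ∀ k : ℕ, ∫ u in Ioi (0 : ℝ), ‖auxG lam mu x s k u‖
      = auxC lam mu x k * ((Nat.factorial k : ℝ) / (s + mu) ^ (k + 1)) := by
    intro k
    rw [← hval k]
    refine setIntegral_congr_fun measurableSet_Ioi fun u hu => ?_
    have hu0 : (0 : ℝ) < u := hu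
    have : 0 ≤ auxG lam mu x s k u := by
      unfold auxG
      have := hcnn k
      positivity
    exact Real.norm_of_nonneg this
  have hswap : ∑' k : ℕ, ∫ u in Ioi (0 : ℝ), auxG lam mu x s k u
      = ∫ u in Ioi (0 : ℝ), ∑' k : ℕ, auxG lam mu x s k u := by
    refine integral_tsum_of_summable_integral_norm hint ?_
    exact ((auxC_summable lam mu x s hpne).congr fun k => (hnorm k).symm)
  -- main computation
  rw [setIntegral_congr_fun measurableSet_Ioi key, integral_const_mul,
    aux_translate (fun u => ∑' k, auxG lam mu x s k u) x, ← hswap,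
    tsum_congr hval, auxC_tsum lam mu x s hpne,
    show -x * (s + lam) = -(lam + s) * x by ring]
  ring
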